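/- Let E and E₁ be finite-dimensional real inner product spaces, A : E → E₁ a linear map with adjoint A*, f ∈ E₁, λ > 0, and J̃ : E → ℝ a convex function. If v_k minimizes the function v ↦ J̃(v) − ⟨q_{k-1}, Av⟩ + λ‖Av − f‖² over E for some q_{k-1} ∈ E₁, and q_k := q_{k-1} + 2λ(f − A v_k), then A*q_k is a subgradient of J̃ at v_k. -/
import Mathlib


open RealInnerProductSpace

/-- One step of the augmented Lagrangian iteration for a convex `J`:
if `v_k` minimizes `v ↦ J(v) − ⟪q_{k−1}, Av⟫ + λ‖Av − f‖²` and
`q_k := q_{k−1} + 2λ(f − A v_k)`, then `A*q_k` is a subgradient of `J` at `v_k`. -/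
theorem statement3 {E E₁ : Type*}
    [NormedAddCommGroup E] [InnerProductSpace ℝ E] [FiniteDimensional ℝ E]
    [NormedAddCommGroup E₁] [InnerProductSpace ℝ E₁] [FiniteDimensional ℝ E₁]
    (A : E →ₗ[ℝ] E₁) (f : E₁) (lam : ℝ) (hlam : 0 < lam)
    (J : E → ℝ) (hJ : ConvexOn ℝ Set.univ J)
    (qprev : E₁) (vk : E)
    (hmin : ∀ w, J vk - ⟪qprev, A vk⟫ + lam * ‖A vk - f‖ ^ 2 ≤
      J w - ⟪qprev, A w⟫ + lam * ‖A w - f‖ ^ 2) :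
    ∀ w, J vk + ⟪(LinearMap.adjoint A) (qprev + (2 * lam) • (f - A vk)), w - vk⟫ ≤ J w := by
  intro w
  set u : E₁ := A (w - vk) with hu
  have hadj : ⟪(LinearMap.adjoint A) (qprev + (2 * lam) • (f - A vk)), w - vk⟫
      = ⟪qprev, u⟫ - 2 * lam * ⟪A vk - f, u⟫ := by
    rw [LinearMap.adjoint_inner_left, inner_add_left, real_inner_smul_left,
      inner_sub_left, inner_sub_left]
    ring
  rw [hadj]
  -- key inequality for each t ∈ (0,1]
  have key : ∀ t : ℝ, 0 < t → t ≤ 1 →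
      J vk + (⟪qprev, u⟫ - 2 * lam * ⟪A vk - f, u⟫) ≤ J w + lam * t * ‖u‖ ^ 2 := by
    intro t ht ht1
    have hwt := hmin (vk + t • (w - vk))
    have hconv : J (vk + t • (w - vk)) ≤ (1 - t) * J vk + t * J w := by
      have := hJ.2 (Set.mem_univ vk) (Set.mem_univ w) (by linarith : (0:ℝ) ≤ 1 - t)
        ht.le (by ring)
      have heq : (1 - t) • vk + t • w = vk + t • (w - vk) := by
        rw [smul_sub, sub_smul, one_smul]; abel
      rwa [heq] at this
    have hA : A (vk + t • (w - vk)) = A vk + t • u := by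
      rw [map_add, map_smul]
    have hinner : ⟪qprev, A (vk + t • (w - vk))⟫ = ⟪qprev, A vk⟫ + t * ⟪qprev, u⟫ := by
      rw [hA, inner_add_right, real_inner_smul_right]
    have hnorm : ‖A (vk + t • (w - vk)) - f‖ ^ 2
        = ‖A vk - f‖ ^ 2 + 2 * (t * ⟪A vk - f, u⟫) + t ^ 2 * ‖u‖ ^ 2 := by
      rw [hA]
      have : A vk + t • u - f = (A vk - f) + t • u := by abel
      rw [this, norm_add_sq_real, real_inner_smul_right, norm_smul]
      simp [mul_pow, abs_of_pos ht]
    rw [hinner, hnorm] at hwt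
    nlinarith [hwt, hconv, ht, mul_pos hlam ht]
  -- pass to the limit t → 0⁺
  refine le_of_forall_pos_le_add ?_
  intro ε hε
  set t : ℝ := min 1 (ε / (lam * ‖u‖ ^ 2 + 1)) with htdef
  have hden : 0 < lam * ‖u‖ ^ 2 + 1 := by positivity
  have ht0 : 0 < t := lt_min one_pos (div_pos hε hden)
  have ht1 : t ≤ 1 := min_le_left _ _
  have h1 := key t ht0 ht1
  have ht2 : t ≤ ε / (lam * ‖u‖ ^ 2 + 1) := min_le_right _ _
  have h2 : lam * t * ‖u‖ ^ 2 ≤ ε := by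
    have ht3 : t * (lam * ‖u‖ ^ 2 + 1) ≤ ε :=
      (mul_le_mul_of_nonneg_right ht2 hden.le).trans_eq (div_mul_cancel₀ ε hden.ne')
    nlinarith [ht0]
  linarith
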